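/- Let p ≥ 1 and let A = S¹ × [0,1] be the closed annulus, where S¹ is the unit circle in ℂ. Set b_i = (exp(2πi i/p), 0) and c_i = (exp(2πi i/p), 1) for i = 0, …, p−1. Suppose σ is a bijection of {0, …, p−1} and γ_0, …, γ_{p−1} : [0,1] → A are injective paths with pairwise disjoint images, where γ_i runs from b_i to c_{σ(i)} and meets the boundary circles S¹ × {0, 1} exactly at its two endpoints. Then σ is a cyclic rotation: there exists an integer c such that σ(i) ≡ i + c (mod p) for every i. -/

import Mathlib

open Complex Real

/-- The `p` equally spaced points `exp(2πik/p)` on the unit circle in `ℂ`. -/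
noncomputable def annulusPt (p : ℕ) (i : Fin p) : ℂ :=
  Complex.exp (2 * Real.pi * Complex.I * i / p)

/-!
Continue the angle of the arc `γ_i` from `2πi/p`; it ends at an angle `2πN_i/p` with
`N_i ≡ σ(i) (mod p)`, and `Γ_i(t) = angle + i·height` is a crossing of the strip `ℝ × [0,1]`,
the universal cover of the annulus. Disjoint crossings keep their left-to-right order: the map
`Φ(s,t) = Γ₂(t) - Γ₁(s)` on the unit square has a continuous argument `α`, with `sin α ≤ 0` on
the bottom and right edges and `sin α ≥ 0` on the left and top edges, so `α` agrees at the two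
corners, where `Φ` is real. Comparing `Γ_j` with all translates `Γ_i + 2πn` shows that `i ↦ N_i`
is strictly increasing with `N_{p-1} - N_0 < p`, hence `N_i = N_0 + i`.
-/

open Set

theorem exists_continuous_log_unitSquare {Φ : unitInterval × unitInterval → ℂ}
    (hΦ : Continuous Φ) (hne : ∀ q, Φ q ≠ 0) :
    ∃ L : unitInterval × unitInterval → ℂ, Continuous L ∧ ∀ q, exp (L q) = Φ q := by
  let H : C(unitInterval × unitInterval, {z : ℂ // z ≠ 0}) :=
    ⟨fun q ↦ ⟨Φ q, hne q⟩, hΦ.subtype_mk _⟩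
  obtain ⟨L₀, hL₀, -⟩ := isCoveringMap_exp.exists_path_lifts
    (H.comp ⟨fun t ↦ (0, t), by fun_prop⟩) (log (Φ (0, 0))) (Subtype.ext (exp_log (hne _)).symm)
  have hH₀ : ∀ t, H (0, t) = ⟨exp (L₀ t), exp_ne_zero _⟩ := fun t ↦ (congr_fun hL₀ t).symm
  exact ⟨_, (isCoveringMap_exp.liftHomotopy H L₀ hH₀).continuous,
    fun q ↦ congr_arg Subtype.val (congr_fun (isCoveringMap_exp.liftHomotopy_lifts H L₀ hH₀) q)⟩

theorem exists_continuous_angle_of_norm_eq_one {f : unitInterval → ℂ} (hf : Continuous f)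
    (hnorm : ∀ t, ‖f t‖ = 1) {θ₀ : ℝ} (h₀ : exp (θ₀ * I) = f 0) :
    ∃ θ : unitInterval → ℝ, Continuous θ ∧ θ 0 = θ₀ ∧ ∀ t, exp (θ t * I) = f t := by
  let F : C(unitInterval, Circle) :=
    ⟨fun t ↦ ⟨f t, mem_sphere_zero_iff_norm.2 (hnorm t)⟩, hf.subtype_mk _⟩
  obtain ⟨θ, hθ, hθ₀⟩ := Circle.isCoveringMap_exp.exists_path_lifts F θ₀ (Circle.ext h₀.symm)
  exact ⟨θ, θ.continuous, hθ₀, fun t ↦ congr_arg Subtype.val (congr_fun hθ t)⟩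

theorem eq_of_forall_mem_uIcc_sin_eq_zero {a b : ℝ} (h : ∀ x ∈ uIcc a b, Real.sin x = 0) :
    a = b := by
  wlog hab : a ≤ b generalizing a b
  · exact (this (by rwa [uIcc_comm]) (le_of_not_ge hab)).symm
  by_contra hne
  set d := min (b - a) 1
  have hd : 0 < d := lt_min (sub_pos.2 (lt_of_le_of_ne hab hne)) one_pos
  have hsin : Real.sin d = 0 := by
    have ha := h a left_mem_uIcc
    have had := h (a + d) (by
      rw [uIcc_of_le hab]; constructor <;> linarith [min_le_left (b - a) 1])
    rw [show d = a + d - a by ring, Real.sin_sub, ha, had]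
    ring
  exact (sin_pos_of_pos_of_lt_pi hd (by linarith [min_le_right (b - a) 1, pi_gt_three])).ne' hsin

theorem eq_of_sin_nonpos_of_sin_nonneg {X : Type*} [TopologicalSpace X] {α : X → ℝ}
    {D U : Set X} (hD : IsPreconnected D) (hU : IsPreconnected U)
    (hαD : ContinuousOn α D) (hαU : ContinuousOn α U)
    (hsD : ∀ q ∈ D, Real.sin (α q) ≤ 0) (hsU : ∀ q ∈ U, 0 ≤ Real.sin (α q))
    {x y : X} (hx : x ∈ D ∩ U) (hy : y ∈ D ∩ U) : α x = α y := by
  refine eq_of_forall_mem_uIcc_sin_eq_zero fun z hz ↦ ?_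
  obtain ⟨q, hq, rfl⟩ := (hD.image α hαD).ordConnected.uIcc_subset ⟨x, hx.1, rfl⟩ ⟨y, hy.1, rfl⟩ hz
  obtain ⟨q', hq', hq'q⟩ :=
    (hU.image α hαU).ordConnected.uIcc_subset ⟨x, hx.2, rfl⟩ ⟨y, hy.2, rfl⟩ hz
  exact le_antisymm (hsD q hq) (hq'q ▸ hsU q' hq')

structure IsStripCrossing (Γ : unitInterval → ℂ) : Prop where
  continuous : Continuous Γ
  im_mem : ∀ t, (Γ t).im ∈ Icc (0 : ℝ) 1
  im_zero : (Γ 0).im = 0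
  im_one : (Γ 1).im = 1

theorem IsStripCrossing.add_ofReal {Γ : unitInterval → ℂ} (h : IsStripCrossing Γ) (x : ℝ) :
    IsStripCrossing (fun t ↦ Γ t + x) where
  continuous := h.continuous.add continuous_const
  im_mem t := by simpa using h.im_mem t
  im_zero := by simpa using h.im_zero
  im_one := by simpa using h.im_one

theorem IsStripCrossing.re_lt_iff {Γ₁ Γ₂ : unitInterval → ℂ} (h₁ : IsStripCrossing Γ₁)
    (h₂ : IsStripCrossing Γ₂) (hdisj : ∀ s t, Γ₁ s ≠ Γ₂ t) :
    (Γ₁ 0).re < (Γ₂ 0).re ↔ (Γ₁ 1).re < (Γ₂ 1).re := by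
  set Φ : unitInterval × unitInterval → ℂ := fun q ↦ Γ₂ q.2 - Γ₁ q.1
  obtain ⟨L, hLc, hL⟩ := exists_continuous_log_unitSquare (Φ := Φ)
    ((h₂.continuous.comp continuous_snd).sub (h₁.continuous.comp continuous_fst))
    (fun q ↦ sub_ne_zero.2 (hdisj q.1 q.2).symm)
  have hre q : (Φ q).re = Real.exp (L q).re * Real.cos (L q).im := by rw [← hL, exp_re]
  have him q : (Φ q).im = Real.exp (L q).re * Real.sin (L q).im := by rw [← hL, exp_im]
  set D : Set (unitInterval × unitInterval) := range (fun s ↦ (s, 0)) ∪ range (fun t ↦ (1, t))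
  set U : Set (unitInterval × unitInterval) := range (fun t ↦ (0, t)) ∪ range (fun s ↦ (s, 1))
  have hD : IsPreconnected D := (isPreconnected_range (by fun_prop)).union (1, 0)
    ⟨1, rfl⟩ ⟨0, rfl⟩ (isPreconnected_range (by fun_prop))
  have hU : IsPreconnected U := (isPreconnected_range (by fun_prop)).union (0, 1)
    ⟨1, rfl⟩ ⟨0, rfl⟩ (isPreconnected_range (by fun_prop))
  have hsD : ∀ q ∈ D, Real.sin (L q).im ≤ 0 := by
    refine fun q hq ↦ nonpos_of_mul_nonpos_right ?_ (Real.exp_pos (L q).re)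
    rw [← him]
    rcases hq with ⟨s, rfl⟩ | ⟨t, rfl⟩ <;> simp only [Φ, sub_im, h₂.im_zero, h₁.im_one]
    · linarith [(h₁.im_mem s).1]
    · linarith [(h₂.im_mem t).2]
  have hsU : ∀ q ∈ U, 0 ≤ Real.sin (L q).im := by
    refine fun q hq ↦ (mul_nonneg_iff_of_pos_left (Real.exp_pos (L q).re)).1 ?_
    rw [← him]
    rcases hq with ⟨t, rfl⟩ | ⟨s, rfl⟩ <;> simp only [Φ, sub_im, h₁.im_zero, h₂.im_one]
    · linarith [(h₂.im_mem t).1]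
    · linarith [(h₁.im_mem s).2]
  have hcorner : (L (0, 0)).im = (L (1, 1)).im :=
    eq_of_sin_nonpos_of_sin_nonneg hD hU (Complex.continuous_im.comp hLc).continuousOn
      (Complex.continuous_im.comp hLc).continuousOn hsD hsU
      ⟨Or.inl ⟨0, rfl⟩, Or.inl ⟨0, rfl⟩⟩ ⟨Or.inr ⟨1, rfl⟩, Or.inr ⟨1, rfl⟩⟩
  have hsign q : (Γ₁ q.1).re < (Γ₂ q.2).re ↔ 0 < Real.cos (L q).im := by
    rw [← sub_pos, ← sub_re, show Γ₂ q.2 - Γ₁ q.1 = Φ q from rfl, hre]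
    exact mul_pos_iff_of_pos_left (Real.exp_pos _)
  exact (hsign (0, 0)).trans (hcorner ▸ (hsign (1, 1)).symm)

theorem angle_add_lt_iff_of_disjoint_range {γ₁ γ₂ : unitInterval → ℂ × ℝ}
    {θ₁ θ₂ : unitInterval → ℝ} (h₁ : IsStripCrossing fun t ↦ θ₁ t + (γ₁ t).2 * I)
    (h₂ : IsStripCrossing fun t ↦ θ₂ t + (γ₂ t).2 * I)
    (hθ₁ : ∀ t, exp (θ₁ t * I) = (γ₁ t).1) (hθ₂ : ∀ t, exp (θ₂ t * I) = (γ₂ t).1)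
    (hdisj : Disjoint (range γ₁) (range γ₂)) (n : ℤ) :
    θ₁ 0 + 2 * π * n < θ₂ 0 ↔ θ₁ 1 + 2 * π * n < θ₂ 1 := by
  have hsep s t : θ₁ s + (γ₁ s).2 * I + (2 * π * n : ℝ) ≠ θ₂ t + (γ₂ t).2 * I := by
    intro heq
    have hθ : θ₂ t = θ₁ s + 2 * π * n := by simpa using congrArg re heq.symm
    have hy : (γ₂ t).2 = (γ₁ s).2 := by simpa using congrArg im heq.symm
    have hz : (γ₂ t).1 = (γ₁ s).1 := by
      rw [← hθ₁, ← hθ₂]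
      exact exp_eq_exp_iff_exists_int.2 ⟨n, by rw [hθ]; push_cast; ring⟩
    exact hdisj.ne_of_mem ⟨s, rfl⟩ ⟨t, rfl⟩ (Prod.ext hz hy).symm
  simpa using (h₁.add_ofReal (2 * π * n)).re_lt_iff h₂ hsep

theorem exists_int_eq_of_exp_mul_I_eq_annulusPt {p : ℕ} {k : Fin p} {θ : ℝ}
    (h : exp (θ * I) = annulusPt p k) : ∃ N : ℤ, θ = 2 * π * N / p ∧ (N : ZMod p) = k := by
  have hp : (p : ℂ) ≠ 0 := Nat.cast_ne_zero.2 (Fin.pos k).ne'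
  obtain ⟨m, hm⟩ := exp_eq_exp_iff_exists_int.1 h
  refine ⟨k + p * m, ofReal_injective (mul_left_injective₀ I_ne_zero ?_), by simp⟩
  simp only [hm]
  push_cast
  field_simp

theorem two_pi_mul_div_add_lt_iff {p : ℝ} (hp : 0 < p) (a b n : ℝ) :
    2 * π * a / p + 2 * π * n < 2 * π * b / p ↔ a + p * n < b := by
  rw [show 2 * π * a / p + 2 * π * n = 2 * π / p * (a + p * n) by field_simp,
    show 2 * π * b / p = 2 * π / p * b by ring]
  exact mul_lt_mul_iff_right₀ (by positivity)

theorem Fin.exists_eq_add_of_add_mul_lt_iff {p : ℕ} (N : Fin p → ℤ)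
    (h : ∀ i j : Fin p, ∀ n : ℤ, (i : ℤ) + p * n < j ↔ N i + p * n < N j) :
    ∃ c : ℤ, ∀ i, N i = i + c := by
  rcases p with _ | p
  · exact ⟨0, fun i ↦ i.elim0⟩
  have hmono : StrictMono N := fun i j hij ↦ by simpa using (h i j 0).1 (by simpa using hij)
  have hspread i : N i < N 0 + (p + 1) := by
    have := (h i 0 (-1)).1 (by push_cast; omega)
    push_cast at this
    linarith
  have hge i : N 0 ≤ N i := hmono.monotone (Fin.zero_le i)
  let r : Fin (p + 1) → Fin (p + 1) := fun i ↦ ⟨(N i - N 0).toNat, by have := hspread i; omega⟩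
  have hr : StrictMono r := fun i j hij ↦ by
    have := hmono hij
    have := hge i
    simp only [r, Fin.mk_lt_mk]
    omega
  refine ⟨N 0, fun i ↦ ?_⟩
  have : (N i - N 0).toNat = i := congrArg Fin.val (congrFun hr.eq_id i)
  have := hge i
  omega

theorem annulus_arcs_rotation_general (p : ℕ)
    (σ : Fin p → Fin p)
    (γ : Fin p → unitInterval → ℂ × ℝ)
    (hcont : ∀ i, Continuous (γ i))
    (hmem : ∀ i t, ‖(γ i t).1‖ = 1 ∧ (γ i t).2 ∈ Set.Icc (0 : ℝ) 1)
    (hdisj : ∀ i j, i ≠ j → Disjoint (Set.range (γ i)) (Set.range (γ j)))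
    (h0 : ∀ i, γ i 0 = (annulusPt p i, 0))
    (h1 : ∀ i, γ i 1 = (annulusPt p (σ i), 1)) :
    ∃ c : ZMod p, ∀ i : Fin p, ((σ i : ℕ) : ZMod p) = ((i : ℕ) : ZMod p) + c := by
  choose θ hθc hθ0 hθ using fun i ↦ exists_continuous_angle_of_norm_eq_one
    (f := fun t ↦ (γ i t).1) (continuous_fst.comp (hcont i)) (fun t ↦ (hmem i t).1)
    (θ₀ := 2 * π * (i : ℕ) / p) (by rw [h0, annulusPt]; push_cast; ring_nf)
  choose N hN hNσ using fun i ↦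
    exists_int_eq_of_exp_mul_I_eq_annulusPt ((hθ i 1).trans (by rw [h1]))
  have hΓ i : IsStripCrossing fun t ↦ θ i t + (γ i t).2 * I :=
    ⟨by fun_prop, fun t ↦ by simpa using (hmem i t).2, by simp [h0], by simp [h1]⟩
  have horder (i j : Fin p) (n : ℤ) : (i : ℤ) + p * n < j ↔ N i + p * n < N j := by
    rcases eq_or_ne i j with rfl | hij
    · simp only [add_lt_iff_neg_left]
    have key := angle_add_lt_iff_of_disjoint_range (hΓ i) (hΓ j) (hθ i) (hθ j) (hdisj i j hij) n
    have hp : (0 : ℝ) < p := Nat.cast_pos.2 i.pos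
    rw [hθ0, hθ0, hN, hN, two_pi_mul_div_add_lt_iff hp, two_pi_mul_div_add_lt_iff hp] at key
    exact_mod_cast key
  obtain ⟨c, hc⟩ := Fin.exists_eq_add_of_add_mul_lt_iff N horder
  exact ⟨c, fun i ↦ by rw [← hNσ i, hc i]; push_cast; ring⟩

/-- If `p` pairwise disjoint injective arcs in the closed annulus `A = S¹ × [0,1]` join the
equally spaced point `b_i = (exp(2πii/p), 0)` of one boundary circle to the point
`c_{σ(i)} = (exp(2πiσ(i)/p), 1)` of the other, each arc meeting the boundary circles
exactly in its endpoints, then the bijection `σ` is a cyclic rotation `i ↦ i + c (mod p)`. -/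
theorem annulus_arcs_rotation (p : ℕ) (hp : 1 ≤ p)
    (σ : Fin p → Fin p) (hσ : Function.Bijective σ)
    (γ : Fin p → unitInterval → ℂ × ℝ)
    (hcont : ∀ i, Continuous (γ i))
    (hinj : ∀ i, Function.Injective (γ i))
    (hmem : ∀ i t, ‖(γ i t).1‖ = 1 ∧ (γ i t).2 ∈ Set.Icc (0 : ℝ) 1)
    (hbdry : ∀ i t, ((γ i t).2 = 0 ∨ (γ i t).2 = 1) ↔ (t = 0 ∨ t = 1))
    (hdisj : ∀ i j, i ≠ j → Disjoint (Set.range (γ i)) (Set.range (γ j)))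
    (h0 : ∀ i, γ i 0 = (annulusPt p i, 0))
    (h1 : ∀ i, γ i 1 = (annulusPt p (σ i), 1)) :
    ∃ c : ZMod p, ∀ i : Fin p, ((σ i : ℕ) : ZMod p) = ((i : ℕ) : ZMod p) + c :=
  annulus_arcs_rotation_general p σ γ hcont hmem hdisj h0 h1
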